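/- Let ε > 0 and define, for sequences v^ℓ in a finite-dimensional inner product space given by the linearized fixed-point iteration of Algorithm 4.1 (v^ℓ solves the linear equation (v^ℓ − u^{prev})/Δt = (1/2)div⁺(∇⁺v^ℓ/√(ε + |∇⁺v^{ℓ−1}|²)) + (1/2)div⁻(∇⁻v^ℓ/√(ε + |∇⁻v^{ℓ−1}|²)) − (1/λ)(v^ℓ − f)). Then the discrete L² norms ‖v^ℓ‖ are bounded uniformly in ℓ: (1/Δt + 1/λ)‖v^ℓ‖ ≤ (1/Δt)‖u^{prev}‖ + (1/λ)‖f‖. -/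

import Mathlib

/-- Forward difference gradient, first component, reflecting boundary. -/
def gp1 (n : ℕ) (u : ℕ → ℕ → ℝ) (i j : ℕ) : ℝ := u (min (i + 1) (n - 1)) j - u i j

/-- Forward difference gradient, second component, reflecting boundary. -/
def gp2 (n : ℕ) (u : ℕ → ℕ → ℝ) (i j : ℕ) : ℝ := u i (min (j + 1) (n - 1)) - u i j

/-- Backward difference gradient, first component (truncated subtraction clamps at 0). -/
def gm1 (u : ℕ → ℕ → ℝ) (i j : ℕ) : ℝ := u i j - u (i - 1) j

/-- Backward difference gradient, second component. -/
def gm2 (u : ℕ → ℕ → ℝ) (i j : ℕ) : ℝ := u i j - u i (j - 1)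

/-- `div⁺`, the negative adjoint of `∇⁺`. -/
def dvp (n : ℕ) (p₁ p₂ : ℕ → ℕ → ℝ) (i j : ℕ) : ℝ :=
  (if i = 0 then p₁ 0 j else if i = n - 1 then -p₁ (n - 2) j else p₁ i j - p₁ (i - 1) j) +
  (if j = 0 then p₂ i 0 else if j = n - 1 then -p₂ i (n - 2) else p₂ i j - p₂ i (j - 1))

/-- `div⁻`, the negative adjoint of `∇⁻`. -/
def dvm (n : ℕ) (p₁ p₂ : ℕ → ℕ → ℝ) (i j : ℕ) : ℝ :=
  (if i = n - 1 then -p₁ (n - 1) j else if i = 0 then p₁ 1 j else p₁ (i + 1) j - p₁ i j) +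
  (if j = n - 1 then -p₂ i (n - 1) else if j = 0 then p₂ i 1 else p₂ i (j + 1) - p₂ i j)

/-- Discrete `L²` norm on the `n × n` grid (with grid size `h = 1`). -/
noncomputable def discNorm (n : ℕ) (u : ℕ → ℕ → ℝ) : ℝ :=
  Real.sqrt (∑ i ∈ Finset.range n, ∑ j ∈ Finset.range n, (u i j) ^ 2)

/-!
Multiplying the scheme by `v` and summing, the duality `⟨-div± p, v⟩ = ⟨p, ∇± v⟩`
(summation by parts) turns both diffusion terms into `-∑ |∇±v|² / √(ε + |∇±w|²) ≤ 0`.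
What remains is `(1/Δt + 1/λ)‖v‖² ≤ ⟨uprev/Δt + f/λ, v⟩`, and Cauchy–Schwarz followed by
division by `‖v‖` gives the bound.
-/

open Finset

section SummationByParts

/-! One-dimensional factors of `gp1`, `gp2`, `dvp` and `dvm`, acting along a single grid axis. -/

variable (n : ℕ) (p v : ℕ → ℝ)

def gradFwd (i : ℕ) : ℝ := v (min (i + 1) (n - 1)) - v i

def gradBwd (i : ℕ) : ℝ := v i - v (i - 1)

def divFwd (i : ℕ) : ℝ :=
  if i = 0 then p 0 else if i = n - 1 then -p (n - 2) else p i - p (i - 1)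

def divBwd (i : ℕ) : ℝ :=
  if i = n - 1 then -p (n - 1) else if i = 0 then p 1 else p (i + 1) - p i

variable {n}

theorem sum_divFwd_mul (hn : 2 ≤ n) :
    ∑ i ∈ range n, divFwd n p i * v i = -∑ i ∈ range n, p i * gradFwd n v i := by
  obtain ⟨m, rfl⟩ : ∃ m, n = m + 2 := ⟨n - 2, by omega⟩
  have telescope : ∑ i ∈ range m, (p (i + 1) - p i) * v (i + 1) +
      ∑ i ∈ range m, p (i + 1) * (v (i + 2) - v (i + 1)) = p m * v (m + 1) - p 0 * v 1 := by
    rw [← sum_add_distrib, ← sum_range_sub (fun i => p i * v (i + 1))]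
    exact sum_congr rfl fun i _ => by ring
  have div_interior : ∀ i ∈ range m,
      divFwd (m + 2) p (i + 1) * v (i + 1) = (p (i + 1) - p i) * v (i + 1) := by
    intro i hi
    simp [divFwd, (mem_range.1 hi).ne]
  have grad_interior : ∀ i ∈ range m,
      p (i + 1) * gradFwd (m + 2) v (i + 1) = p (i + 1) * (v (i + 2) - v (i + 1)) := by
    intro i hi
    have := mem_range.1 hi
    simp [gradFwd, show min (i + 1 + 1) (m + 1) = i + 2 by omega]
  have div_first : divFwd (m + 2) p 0 = p 0 := by simp [divFwd]
  have div_last : divFwd (m + 2) p (m + 1) = -p m := by simp [divFwd]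
  have grad_first : gradFwd (m + 2) v 0 = v 1 - v 0 := by simp [gradFwd]
  have grad_last : gradFwd (m + 2) v (m + 1) = 0 := by simp [gradFwd]
  rw [sum_range_succ, sum_range_succ', sum_range_succ, sum_range_succ', sum_congr rfl div_interior,
    sum_congr rfl grad_interior, div_first, div_last, grad_first, grad_last]
  linarith

theorem sum_divBwd_mul (hn : 2 ≤ n) :
    ∑ i ∈ range n, divBwd n p i * v i = -∑ i ∈ range n, p i * gradBwd v i := by
  obtain ⟨m, rfl⟩ : ∃ m, n = m + 2 := ⟨n - 2, by omega⟩
  have telescope : ∑ i ∈ range m, (p (i + 2) - p (i + 1)) * v (i + 1) +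
      ∑ i ∈ range m, p (i + 1) * (v (i + 1) - v i) = p (m + 1) * v m - p 1 * v 0 := by
    rw [← sum_add_distrib, ← sum_range_sub (fun i => p (i + 1) * v i)]
    exact sum_congr rfl fun i _ => by ring
  have div_interior : ∀ i ∈ range m,
      divBwd (m + 2) p (i + 1) * v (i + 1) = (p (i + 2) - p (i + 1)) * v (i + 1) := by
    intro i hi
    simp [divBwd, (mem_range.1 hi).ne]
  have div_first : divBwd (m + 2) p 0 = p 1 := by simp [divBwd]
  have div_last : divBwd (m + 2) p (m + 1) = -p (m + 1) := by simp [divBwd]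
  have grad_first : gradBwd v 0 = 0 := by simp [gradBwd]
  rw [sum_range_succ, sum_range_succ', sum_range_succ, sum_range_succ', sum_congr rfl div_interior,
    div_first, div_last, grad_first]
  simp only [gradBwd, Nat.add_sub_cancel]
  linarith

end SummationByParts

def gridInner (n : ℕ) (u v : ℕ → ℕ → ℝ) : ℝ :=
  ∑ i ∈ range n, ∑ j ∈ range n, u i j * v i j

-- `div±(∇±v / c)`; the scheme takes `c = √(ε + |∇±w|²)` with `w = v^{ℓ-1}`.
noncomputable def weightedLaplacianFwd (n : ℕ) (c v : ℕ → ℕ → ℝ) : ℕ → ℕ → ℝ :=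
  dvp n (fun i j => gp1 n v i j / c i j) (fun i j => gp2 n v i j / c i j)

noncomputable def weightedLaplacianBwd (n : ℕ) (c v : ℕ → ℕ → ℝ) : ℕ → ℕ → ℝ :=
  dvm n (fun i j => gm1 v i j / c i j) (fun i j => gm2 v i j / c i j)

section Grid

variable {n : ℕ}

theorem discNorm_sq (u : ℕ → ℕ → ℝ) : discNorm n u ^ 2 = gridInner n u u := by
  simp only [discNorm, gridInner, ← pow_two]
  exact Real.sq_sqrt (sum_nonneg fun i _ => sum_nonneg fun j _ => sq_nonneg _)

theorem gridInner_le_discNorm_mul (u v : ℕ → ℕ → ℝ) :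
    gridInner n u v ≤ discNorm n u * discNorm n v := by
  simpa [gridInner, discNorm, sum_product] using
    Real.sum_mul_le_sqrt_mul_sqrt (range n ×ˢ range n) (fun q => u q.1 q.2) (fun q => v q.1 q.2)

theorem gridInner_dvp (hn : 2 ≤ n) (p₁ p₂ v : ℕ → ℕ → ℝ) :
    gridInner n (dvp n p₁ p₂) v =
      -∑ i ∈ range n, ∑ j ∈ range n, (p₁ i j * gp1 n v i j + p₂ i j * gp2 n v i j) := by
  have h₁ := fun j => sum_divFwd_mul (fun i => p₁ i j) (fun i => v i j) hn
  have h₂ := fun i => sum_divFwd_mul (p₂ i) (v i) hn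
  simp only [gridInner, dvp, add_mul, sum_add_distrib]
  rw [sum_comm (f := fun i j => _ * v i j), sum_comm (f := fun i j => p₁ i j * _)]
  simp only [divFwd, gradFwd] at h₁ h₂
  simp only [gp1, gp2, h₁, h₂, sum_neg_distrib, neg_add]

theorem gridInner_dvm (hn : 2 ≤ n) (p₁ p₂ v : ℕ → ℕ → ℝ) :
    gridInner n (dvm n p₁ p₂) v =
      -∑ i ∈ range n, ∑ j ∈ range n, (p₁ i j * gm1 v i j + p₂ i j * gm2 v i j) := by
  have h₁ := fun j => sum_divBwd_mul (fun i => p₁ i j) (fun i => v i j) hn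
  have h₂ := fun i => sum_divBwd_mul (p₂ i) (v i) hn
  simp only [gridInner, dvm, add_mul, sum_add_distrib]
  rw [sum_comm (f := fun i j => _ * v i j), sum_comm (f := fun i j => p₁ i j * _)]
  simp only [divBwd, gradBwd] at h₁ h₂
  simp only [gm1, gm2, h₁, h₂, sum_neg_distrib, neg_add]

theorem gridInner_weightedLaplacianFwd_nonpos (hn : 2 ≤ n) {c : ℕ → ℕ → ℝ}
    (hc : ∀ i j, 0 ≤ c i j) (v : ℕ → ℕ → ℝ) :
    gridInner n (weightedLaplacianFwd n c v) v ≤ 0 := by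
  rw [weightedLaplacianFwd, gridInner_dvp hn, neg_nonpos]
  refine sum_nonneg fun i _ => sum_nonneg fun j _ => ?_
  rw [div_mul_eq_mul_div, div_mul_eq_mul_div, ← add_div]
  exact div_nonneg (add_nonneg (mul_self_nonneg _) (mul_self_nonneg _)) (hc i j)

theorem gridInner_weightedLaplacianBwd_nonpos (hn : 2 ≤ n) {c : ℕ → ℕ → ℝ}
    (hc : ∀ i j, 0 ≤ c i j) (v : ℕ → ℕ → ℝ) :
    gridInner n (weightedLaplacianBwd n c v) v ≤ 0 := by
  rw [weightedLaplacianBwd, gridInner_dvm hn, neg_nonpos]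
  refine sum_nonneg fun i _ => sum_nonneg fun j _ => ?_
  rw [div_mul_eq_mul_div, div_mul_eq_mul_div, ← add_div]
  exact div_nonneg (add_nonneg (mul_self_nonneg _) (mul_self_nonneg _)) (hc i j)

theorem mul_discNorm_le_of_gridInner_nonpos {a b : ℝ} (ha : 0 ≤ a) (hb : 0 ≤ b)
    (u f v : ℕ → ℕ → ℝ)
    (h : gridInner n (fun i j => a * (v i j - u i j) + b * (v i j - f i j)) v ≤ 0) :
    (a + b) * discNorm n v ≤ a * discNorm n u + b * discNorm n f := by
  have expand : gridInner n (fun i j => a * (v i j - u i j) + b * (v i j - f i j)) v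
      = (a + b) * gridInner n v v - a * gridInner n u v - b * gridInner n f v := by
    simp only [gridInner, mul_sum, ← sum_sub_distrib]
    exact sum_congr rfl fun i _ => sum_congr rfl fun j _ => by ring
  have hu := mul_le_mul_of_nonneg_left (gridInner_le_discNorm_mul (n := n) u v) ha
  have hf := mul_le_mul_of_nonneg_left (gridInner_le_discNorm_mul (n := n) f v) hb
  have hN : 0 ≤ discNorm n v := Real.sqrt_nonneg _
  have key : (a + b) * discNorm n v * discNorm n v
      ≤ (a * discNorm n u + b * discNorm n f) * discNorm n v := by
    nlinarith [discNorm_sq (n := n) v]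
  rcases hN.eq_or_lt with h0 | hpos
  · rw [← h0, mul_zero]
    unfold discNorm
    positivity
  · exact le_of_mul_le_mul_right key hpos

theorem discNorm_le_of_linearizedStep (hn : 2 ≤ n) {cp cm : ℕ → ℕ → ℝ}
    (hcp : ∀ i j, 0 ≤ cp i j) (hcm : ∀ i j, 0 ≤ cm i j) {lam Δt : ℝ} (hlam : 0 ≤ lam)
    (hΔt : 0 ≤ Δt) {f uprev v : ℕ → ℕ → ℝ}
    (hstep : ∀ i ∈ range n, ∀ j ∈ range n, (v i j - uprev i j) / Δt =
      1 / 2 * weightedLaplacianFwd n cp v i j + 1 / 2 * weightedLaplacianBwd n cm v i j -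
        1 / lam * (v i j - f i j)) :
    (1 / Δt + 1 / lam) * discNorm n v ≤ 1 / Δt * discNorm n uprev + 1 / lam * discNorm n f := by
  refine mul_discNorm_le_of_gridInner_nonpos (by positivity) (by positivity) uprev f v ?_
  have energy :
      gridInner n (fun i j => 1 / Δt * (v i j - uprev i j) + 1 / lam * (v i j - f i j)) v =
        1 / 2 * gridInner n (weightedLaplacianFwd n cp v) v +
          1 / 2 * gridInner n (weightedLaplacianBwd n cm v) v := by
    simp only [gridInner, mul_sum, ← sum_add_distrib]
    refine sum_congr rfl fun i hi => sum_congr rfl fun j hj => ?_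
    linear_combination v i j * hstep i hi j hj
  linarith [gridInner_weightedLaplacianFwd_nonpos hn hcp v,
    gridInner_weightedLaplacianBwd_nonpos hn hcm v]

end Grid

theorem stmt_18_general (n : ℕ) (hn : 2 ≤ n) (ε lam Δt : ℝ) (hlam : 0 < lam)
    (hΔt : 0 < Δt) (f uprev w v : ℕ → ℕ → ℝ)
    (heq : ∀ i ∈ Finset.range n, ∀ j ∈ Finset.range n,
      (v i j - uprev i j) / Δt =
        (1 / 2) * dvp n
            (fun i j => gp1 n v i j / Real.sqrt (ε + ((gp1 n w i j) ^ 2 + (gp2 n w i j) ^ 2)))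
            (fun i j => gp2 n v i j / Real.sqrt (ε + ((gp1 n w i j) ^ 2 + (gp2 n w i j) ^ 2)))
            i j +
        (1 / 2) * dvm n
            (fun i j => gm1 v i j / Real.sqrt (ε + ((gm1 w i j) ^ 2 + (gm2 w i j) ^ 2)))
            (fun i j => gm2 v i j / Real.sqrt (ε + ((gm1 w i j) ^ 2 + (gm2 w i j) ^ 2)))
            i j -
        (1 / lam) * (v i j - f i j)) :
    (1 / Δt + 1 / lam) * discNorm n v ≤ (1 / Δt) * discNorm n uprev + (1 / lam) * discNorm n f := by
  exact discNorm_le_of_linearizedStep hn (fun _ _ => Real.sqrt_nonneg _)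
    (fun _ _ => Real.sqrt_nonneg _) hlam.le hΔt.le heq

/-- Lemma 4.2: uniform `L²` bound for the linearized fixed point iteration. -/
theorem stmt_18 (n : ℕ) (hn : 2 ≤ n) (ε lam Δt : ℝ) (hε : 0 < ε) (hlam : 0 < lam)
    (hΔt : 0 < Δt) (f uprev w v : ℕ → ℕ → ℝ)
    (heq : ∀ i ∈ Finset.range n, ∀ j ∈ Finset.range n,
      (v i j - uprev i j) / Δt =
        (1 / 2) * dvp n
            (fun i j => gp1 n v i j / Real.sqrt (ε + ((gp1 n w i j) ^ 2 + (gp2 n w i j) ^ 2)))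
            (fun i j => gp2 n v i j / Real.sqrt (ε + ((gp1 n w i j) ^ 2 + (gp2 n w i j) ^ 2)))
            i j +
        (1 / 2) * dvm n
            (fun i j => gm1 v i j / Real.sqrt (ε + ((gm1 w i j) ^ 2 + (gm2 w i j) ^ 2)))
            (fun i j => gm2 v i j / Real.sqrt (ε + ((gm1 w i j) ^ 2 + (gm2 w i j) ^ 2)))
            i j -
        (1 / lam) * (v i j - f i j)) :
    (1 / Δt + 1 / lam) * discNorm n v ≤ (1 / Δt) * discNorm n uprev + (1 / lam) * discNorm n f :=
  stmt_18_general n hn ε lam Δt hlam hΔt f uprev w v heq
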